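/- Let W be a k-vector space. Then: (i) the formula (x·f)(h) = f(S(x⁽²⁾) h x⁽¹⁾) defines a left H-module structure on Hom_k(H, W); (ii) this module is stable for the contraaction α(Φ)(h) = Φ(h⁽¹⁾)(h⁽²⁾), i.e. for every f ∈ Hom_k(H, W) one has α(h ↦ h·f) = f. -/

import Mathlib

/-!
# Statement 11

`k` a field, `H` a Hopf algebra over `k`, `W` a `k`-vector space.  Then
(i) `(x · f)(h) = f (S(x⁽²⁾) h x⁽¹⁾)` defines a left `H`-module structure on `Hom_k(H, W)`;
(ii) this module is stable for the contraaction `α(Φ)(h) = Φ(h⁽¹⁾)(h⁽²⁾)`: for every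
`f ∈ Hom_k(H, W)` one has `α (h ↦ h · f) = f`.
-/

open TensorProduct

noncomputable section

variable (k : Type) [Field k]
variable (H : Type) [Ring H] [HopfAlgebra k H]

/-- `H ⊗ H →ₗ End_k(H)`, `u ⊗ v ↦ (x ↦ u * x * v)`. -/
def sandwich : H ⊗[k] H →ₗ[k] (H →ₗ[k] H) :=
  (TensorProduct.lift (LinearMap.llcomp k H H H)) ∘ₗ
    (TensorProduct.map (LinearMap.mul k H) (LinearMap.mul k H).flip)

/-- `H ⊗ H →ₗ End_k(Hom_k(H, W))`, `u ⊗ v ↦ (φ ↦ (x ↦ φ (u * x * v)))`. -/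
def sandwichHom (W : Type) [AddCommGroup W] [Module k W] :
    H ⊗[k] H →ₗ[k] (H →ₗ[k] W) →ₗ[k] (H →ₗ[k] W) :=
  (LinearMap.llcomp k H H W).flip ∘ₗ sandwich k H

variable (W : Type) [AddCommGroup W] [Module k W]

/-- The action `H →ₗ End_k(Hom_k(H, W))`: `(x · f)(h) = f (S(x⁽²⁾) h x⁽¹⁾)`. -/
def hActW : H →ₗ[k] (H →ₗ[k] W) →ₗ[k] (H →ₗ[k] W) :=
  (sandwichHom k H W) ∘ₗ
    (LinearMap.rTensor H (HopfAlgebra.antipode (R := k))) ∘ₗ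
    (TensorProduct.comm k H H).toLinearMap ∘ₗ (Coalgebra.comul (R := k))

/-- Evaluation `Hom_k(H, W) ⊗ H →ₗ W`. -/
def evalMap : (H →ₗ[k] W) ⊗[k] H →ₗ[k] W := TensorProduct.lift LinearMap.id

/-- The contraaction `α : Hom_k(H, Hom_k(H, W)) →ₗ Hom_k(H, W)`, `α(Φ)(h) = Φ(h⁽¹⁾)(h⁽²⁾)`. -/
def contra : (H →ₗ[k] (H →ₗ[k] W)) →ₗ[k] (H →ₗ[k] W) :=
  (LinearMap.lcomp k W (Coalgebra.comul (R := k) (A := H))) ∘ₗ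
    (LinearMap.llcomp k (H ⊗[k] H) ((H →ₗ[k] W) ⊗[k] H) W (evalMap k H W)) ∘ₗ
    (LinearMap.rTensorHom (M := H) (N := H) (P := H →ₗ[k] W))

open Coalgebra HopfAlgebra

section HopfIdentity

variable {R A : Type*} [CommSemiring R] [Semiring A] [HopfAlgebra R A]

/-- In Sweedler notation, `a₁₁ ⊗ S(a₁₂) a₂ = a ⊗ 1`: by coassociativity the left side is
`a₁ ⊗ S(a₂₁) a₂₂ = a₁ ⊗ ε(a₂)`. -/
lemma sum_tmul_antipode_mul_eq {a : A} {ι : Type*} {κ : ι → Type*} (r : Repr R a ι)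
    (t : ∀ i, Repr R (r.left i) (κ i)) :
    ∑ i ∈ r.index, ∑ j ∈ (t i).index,
      (t i).left j ⊗ₜ[R] (antipode R ((t i).right j) * r.right i) = a ⊗ₜ[R] 1 := by
  let s i := Repr.arbitrary R (r.right i)
  have coassoc := congrArg (LinearMap.lTensor A (LinearMap.mul' R A ∘ₗ (antipode R).rTensor A))
    (sum_tmul_tmul_eq r t s)
  simp only [map_sum, LinearMap.comp_apply, LinearMap.lTensor_tmul, LinearMap.rTensor_tmul,
    LinearMap.mul'_apply, ← tmul_sum, sum_antipode_mul_eq_algebraMap_counit] at coassoc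
  have counitality := congrArg (LinearMap.lTensor A (Algebra.linearMap R A)) (sum_tmul_counit_eq r)
  simp only [map_sum, LinearMap.lTensor_tmul, Algebra.linearMap_apply, map_one] at counitality
  exact coassoc.trans counitality

end HopfIdentity

lemma sandwichHom_tmul_apply (u v : H) (φ : H →ₗ[k] W) (x : H) :
    sandwichHom k H W (u ⊗ₜ[k] v) φ x = φ (u * (x * v)) := rfl

lemma hActW_apply_eq_sum {x : H} {ι : Type*} (r : Repr k x ι) (f : H →ₗ[k] W) (h : H) :
    hActW k H W x f h = ∑ i ∈ r.index, f (antipode k (r.right i) * (h * r.left i)) := by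
  simp only [hActW, LinearMap.comp_apply, ← r.eq, map_sum, LinearEquiv.coe_coe, comm_tmul,
    LinearMap.rTensor_tmul, LinearMap.sum_apply, sandwichHom_tmul_apply]

lemma contra_apply_eq_sum (Φ : H →ₗ[k] H →ₗ[k] W) {h : H} {ι : Type*} (r : Repr k h ι) :
    contra k H W Φ h = ∑ i ∈ r.index, Φ (r.left i) (r.right i) := by
  simp only [contra, evalMap, LinearMap.comp_apply, LinearMap.lcomp_apply,
    LinearMap.llcomp_apply, ← r.eq, map_sum, LinearMap.coe_rTensorHom, LinearMap.rTensor_tmul,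
    lift.tmul, LinearMap.id_apply]

lemma hActW_mul (x y : H) : hActW k H W (x * y) = hActW k H W x ∘ₗ hActW k H W y := by
  ext f h
  let rx := Repr.arbitrary k x
  let ry := Repr.arbitrary k y
  simp only [LinearMap.comp_apply, hActW_apply_eq_sum k H W (rx.mul ry),
    hActW_apply_eq_sum k H W rx, hActW_apply_eq_sum k H W ry, Repr.mul_index, Repr.mul_left,
    Repr.mul_right, Finset.sum_product, antipode_mul_antidistrib, mul_assoc]

lemma hActW_one : hActW k H W 1 = LinearMap.id := by
  ext f h
  simp [hActW, Bialgebra.comul_one, Algebra.TensorProduct.one_def, sandwichHom_tmul_apply]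

lemma contra_flip_hActW (f : H →ₗ[k] W) : contra k H W ((hActW k H W).flip f) = f := by
  ext h
  let r := Repr.arbitrary k h
  have key := congrArg (f ∘ₗ LinearMap.mul' k H ∘ₗ (TensorProduct.comm k H H).toLinearMap)
    (sum_tmul_antipode_mul_eq r fun i ↦ Repr.arbitrary k (r.left i))
  simp only [map_sum, LinearMap.comp_apply, LinearEquiv.coe_coe, comm_tmul, LinearMap.mul'_apply,
    one_mul] at key
  simpa only [contra_apply_eq_sum k H W _ r, LinearMap.flip_apply,
    hActW_apply_eq_sum k H W (Repr.arbitrary k _), ← mul_assoc] using key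

theorem stmt11 :
    -- (i) the formula defines a left `H`-module structure on `Hom_k(H, W)`
    ((∀ x y : H, hActW k H W (x * y) = hActW k H W x ∘ₗ hActW k H W y)
      ∧ hActW k H W 1 = LinearMap.id)
    -- (ii) stability: `α (h ↦ h · f) = f`
    ∧ (∀ f : H →ₗ[k] W, contra k H W ((hActW k H W).flip f) = f) :=
  ⟨⟨hActW_mul k H W, hActW_one k H W⟩, contra_flip_hActW k H W⟩

end
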